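/- arXiv:math/0606011 — 4 statements merged into one kernel-verified Lean document; each statement's English description precedes it below -/
import Mathlib

section
/- For any crossed G-sets X and Y, the braiding map c_{X,Y} : X⊗Y → Y⊗X defined by c_{X,Y}(x,y) = (|x|•y, x) is an isomorphism of crossed G-sets: it is G-equivariant (c_{X,Y}(g•x, g•y) = g•c_{X,Y}(x,y) for all g ∈ G), it preserves the grading (|c_{X,Y}(x,y)| = |(x,y)| = |x||y|), and it is a bijection with inverse given by (y,x) ↦ (x, |x|⁻¹•y). -/
/-- A crossed `G`-set: a `G`-set `X` with a grading `grade : X → G`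
satisfying `|g • x| = g * |x| * g⁻¹`. -/
class CrossedGSet (G : Type*) [Group G] (X : Type*) extends MulAction G X where
  grade : X → G
  grade_smul : ∀ (g : G) (x : X), grade (g • x) = g * grade x * g⁻¹

/-- The grading of a crossed `G`-set. -/
abbrev gr (G : Type*) [Group G] {X : Type*} [CrossedGSet G X] (x : X) : G :=
  CrossedGSet.grade x

/-- For crossed `G`-sets `X` and `Y`, the braiding `c_{X,Y}(x, y) = (|x| • y, x)` is an
isomorphism of crossed `G`-sets: it is `G`-equivariant, preserves the grading
(for the tensor-product grading `|(x,y)| = |x| * |y|`), and is a bijection with inverse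
`(y, x) ↦ (x, |x|⁻¹ • y)`. -/
theorem braiding_isIso_of_crossedGSets {G X Y : Type*} [Group G]
    [CrossedGSet G X] [CrossedGSet G Y] :
    let c : X × Y → Y × X := fun p => (gr G p.1 • p.2, p.1)
    let cinv : Y × X → X × Y := fun q => (q.2, (gr G q.2)⁻¹ • q.1)
    (∀ (g : G) (x : X) (y : Y), c (g • x, g • y) = (g • (c (x, y)).1, g • (c (x, y)).2)) ∧
    (∀ (x : X) (y : Y), gr G (c (x, y)).1 * gr G (c (x, y)).2 = gr G x * gr G y) ∧
    Function.Bijective c ∧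
    Function.LeftInverse cinv c ∧
    Function.RightInverse cinv c := by
  intro c cinv
  have hli : Function.LeftInverse cinv c := by
    intro p; simp [c, cinv]
  have hri : Function.RightInverse cinv c := by
    intro q; simp [c, cinv]
  refine ⟨?_, ?_, ⟨hli.injective, hri.surjective⟩, hli, hri⟩
  · intro g x y
    simp only [c, CrossedGSet.grade_smul, Prod.mk.injEq]
    refine ⟨?_, trivial⟩
    rw [← mul_smul, ← mul_smul, inv_mul_cancel_right, mul_smul]
  · intro x y
    simp only [c, CrossedGSet.grade_smul]
    group
end

section
/- For any crossed G-set X, the twist θ_X : X → X defined by θ_X(x) = |x|•x is an automorphism of the crossed G-set X: it is G-equivariant (θ_X(g•x) = g•θ_X(x)), it preserves the grading (|θ_X(x)| = |x|), it is bijective, and it is natural, i.e., θ_Y ∘ f = f ∘ θ_X for every morphism of crossed G-sets f : X → Y. -/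
/-- For a crossed `G`-set `X`, the twist `θ_X(x) = |x| • x` is an automorphism of the
crossed `G`-set `X`: it is `G`-equivariant, grading-preserving and bijective; moreover it
is natural: `θ_Y ∘ f = f ∘ θ_X` for every morphism of crossed `G`-sets `f : X → Y`. -/
theorem twist_isAut_of_crossedGSets {G : Type*} {X : Type u} [Group G] [CrossedGSet G X] :
    let θ : X → X := fun x => gr G x • x
    (∀ (g : G) (x : X), θ (g • x) = g • θ x) ∧
    (∀ x : X, gr G (θ x) = gr G x) ∧
    Function.Bijective θ ∧
    (∀ (Y : Type v) [CrossedGSet G Y] (f : X → Y),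
      (∀ (g : G) (x : X), f (g • x) = g • f x) →
      (∀ x : X, gr G (f x) = gr G x) →
      ∀ x : X, gr G (f x) • f x = f (θ x)) := by
  intro θ
  have hgr : ∀ x : X, gr G (θ x) = gr G x := fun x => by
    simp [θ, gr, CrossedGSet.grade_smul]
  refine ⟨fun g x => ?_, hgr, ?_, fun Y _ f hf hg x => ?_⟩
  · simp only [θ, gr, CrossedGSet.grade_smul, mul_smul]
    simp [← mul_smul]
  · have hinv : Function.LeftInverse (fun x : X => (gr G x)⁻¹ • x) θ := by
      intro x
      show (gr G (θ x))⁻¹ • θ x = x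
      rw [hgr x]; simp [θ, ← mul_smul]
    have hrinv : Function.RightInverse (fun x : X => (gr G x)⁻¹ • x) θ := by
      intro x
      show gr G ((gr G x)⁻¹ • x) • ((gr G x)⁻¹ • x) = x
      simp [gr, CrossedGSet.grade_smul, ← mul_smul]
    exact ⟨hinv.injective, hrinv.surjective⟩
  · rw [hg x, hf]
end

section
/- Let k be a field, C a small category, and X, Y : C ⥤ Vect_k functors such that X(C) and Y(C) are finite dimensional for every object C of C. Then the bifunctor Cᵒᵖ × C → Vect_k sending (A,B) to Hom_k(X(A), Y(B)) has a coend Hom̌(X,Y), and the linear dual Hom̌(X,Y)* is isomorphic to the end Hom(X,Y) (the space of families u = {u_C ∈ Hom_k(X(C), Y(C))} with Y(f) ∘ u_A = u_B ∘ X(f) for all f : A → B); the isomorphism is induced by the pairing ⟨u, [h]⟩ = Tr(u_C ∘ h) for h ∈ Hom_k(Y(C), X(C)). -/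
open CategoryTheory
open scoped Classical DirectSum

universe u

noncomputable section

variable (k : Type u) [Field k] (C : Type u) [SmallCategory C]
variable (X Y : C ⥤ ModuleCat.{u} k)

/-- The subspace of `∏ C, Hom_k(X(C), Y(C))` consisting of the families `u = {u_C}` such
that `Y(f) ∘ u_A = u_B ∘ X(f)` for every morphism `f : A ⟶ B` of `C`; this is the end
`Hom(X, Y)` of the bifunctor `(A, B) ↦ Hom_k(X(A), Y(B))`. -/
def homEnd : Submodule k (∀ c : C, X.obj c →ₗ[k] Y.obj c) where
  carrier := { u | ∀ (A B : C) (f : A ⟶ B) (x : X.obj A), Y.map f (u A x) = u B (X.map f x) }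
  add_mem' := by
    intro u v hu hv A B f x
    simp only [Pi.add_apply, LinearMap.add_apply, map_add, hu A B f x, hv A B f x]
  zero_mem' := by
    intro A B f x
    simp
  smul_mem' := by
    intro c u hu A B f x
    simp only [Pi.smul_apply, LinearMap.smul_apply, map_smul, hu A B f x]

/-- The direct sum `⊕_{C} Hom_k(Y(C), X(C))`. -/
abbrev HomSum := ⨁ (c : C), (Y.obj c →ₗ[k] X.obj c)

/-- The subspace of `⊕_{C} Hom_k(Y(C), X(C))` spanned by all elements
`(h ∘ Y(f))_A − (X(f) ∘ h)_B`, for `f : A ⟶ B` in `C` and `h ∈ Hom_k(Y(B), X(A))`. -/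
def homRel : Submodule k (HomSum k C X Y) :=
  Submodule.span k
    { v | ∃ (A B : C) (f : A ⟶ B) (h : Y.obj B →ₗ[k] X.obj A),
        v = DirectSum.lof k C (fun c => Y.obj c →ₗ[k] X.obj c) A
              (h ∘ₗ ((Y.map f).hom : Y.obj A →ₗ[k] Y.obj B)) -
            DirectSum.lof k C (fun c => Y.obj c →ₗ[k] X.obj c) B
              (((X.map f).hom : X.obj A →ₗ[k] X.obj B) ∘ₗ h) }

/-- The coend `Hom̌(X,Y)`, realized as the quotient of `⊕_{C} Hom_k(Y(C), X(C))` by the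
dinaturality relations. -/
def HomCheck := HomSum k C X Y ⧸ homRel k C X Y

instance : AddCommGroup (HomCheck k C X Y) :=
  inferInstanceAs (AddCommGroup (HomSum k C X Y ⧸ homRel k C X Y))

instance : Module k (HomCheck k C X Y) :=
  inferInstanceAs (Module k (HomSum k C X Y ⧸ homRel k C X Y))

/-- The canonical map `Hom_k(Y(C), X(C)) → Hom̌(X,Y)`, `h ↦ [h]`. -/
def homMk (c : C) : (Y.obj c →ₗ[k] X.obj c) →ₗ[k] HomCheck k C X Y :=
  (homRel k C X Y).mkQ ∘ₗ DirectSum.lof k C (fun c => Y.obj c →ₗ[k] X.obj c) c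

/-!
The dual of the coend, a quotient of `⊕_C Hom(Y C, X C)` by the dinaturality relations, is the
space of cowedges `φ_C : Hom(Y C, X C) → k`. In finite dimensions the trace pairing
`Hom(X C, Y C) × Hom(Y C, X C) → k` is perfect, so `φ_C = Tr(u_C ∘ -)` for a unique `u_C`; by
cyclicity of the trace, the cowedge condition on `φ` reads `Tr((Y f ∘ u_A - u_B ∘ X f) ∘ h) = 0`
for all `h`, which is exactly the naturality of `u`.
-/

namespace LinearMap

variable {k V W : Type*} [Field k] [AddCommGroup V] [Module k V] [AddCommGroup W] [Module k W]

theorem eq_zero_of_forall_trace_comp_eq_zero [FiniteDimensional k W] {u : V →ₗ[k] W}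
    (hu : ∀ h : W →ₗ[k] V, trace k W (u ∘ₗ h) = 0) : u = 0 := by
  ext x
  rw [zero_apply, ← Module.forall_dual_apply_eq_zero_iff k]
  intro f
  have hcomp : u ∘ₗ f.smulRight x = f.smulRight (u x) := by ext; simp
  simpa [hcomp] using hu (f.smulRight x)

variable (k V W) in
def tracePairing : (V →ₗ[k] W) →ₗ[k] Module.Dual k (W →ₗ[k] V) :=
  (llcomp k W V W).compr₂ (trace k W)

variable [FiniteDimensional k W]

theorem tracePairing_injective : Function.Injective (tracePairing k V W) := by
  rw [← ker_eq_bot, eq_bot_iff]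
  exact fun u hu => eq_zero_of_forall_trace_comp_eq_zero fun h => congr($hu h)

variable [FiniteDimensional k V]

variable (k V W) in
noncomputable def traceDualEquiv : (V →ₗ[k] W) ≃ₗ[k] Module.Dual k (W →ₗ[k] V) :=
  (tracePairing k V W).linearEquivOfInjective tracePairing_injective <| by
    rw [Subspace.dual_finrank_eq, Module.finrank_linearMap, Module.finrank_linearMap, mul_comm]

variable {V₁ V₂ W₁ W₂ : Type*} [AddCommGroup V₁] [Module k V₁] [AddCommGroup V₂] [Module k V₂]
  [AddCommGroup W₁] [Module k W₁] [AddCommGroup W₂] [Module k W₂]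
  [FiniteDimensional k W₁] [FiniteDimensional k W₂]

theorem comp_eq_comp_iff_forall_trace_eq {a : V₁ →ₗ[k] W₁} {b : V₂ →ₗ[k] W₂}
    {p : V₁ →ₗ[k] V₂} {q : W₁ →ₗ[k] W₂} :
    q ∘ₗ a = b ∘ₗ p ↔ ∀ h : W₂ →ₗ[k] V₁, trace k W₁ (a ∘ₗ h ∘ₗ q) = trace k W₂ (b ∘ₗ p ∘ₗ h) := by
  have hcycle (h : W₂ →ₗ[k] V₁) : trace k W₁ (a ∘ₗ h ∘ₗ q) = trace k W₂ (q ∘ₗ a ∘ₗ h) := by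
    rw [← comp_assoc, trace_comp_comm']
  simp_rw [hcycle, ← comp_assoc]
  refine ⟨fun hsq h => by rw [hsq], fun htr => ?_⟩
  rw [← sub_eq_zero]
  exact eq_zero_of_forall_trace_comp_eq_zero fun h => by rw [sub_comp, map_sub, htr, sub_self]

end LinearMap

section Coend

variable {k C X Y}

theorem homMk_comp_map (A B : C) (f : A ⟶ B) (h : Y.obj B →ₗ[k] X.obj A) :
    homMk k C X Y A (h ∘ₗ (Y.map f).hom) = homMk k C X Y B ((X.map f).hom ∘ₗ h) :=
  (Submodule.Quotient.eq _).mpr (Submodule.subset_span ⟨A, B, f, h, rfl⟩)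

@[ext]
theorem HomCheck.hom_ext {W : Type*} [AddCommGroup W] [Module k W]
    {φ ψ : HomCheck k C X Y →ₗ[k] W} (H : ∀ c, φ ∘ₗ homMk k C X Y c = ψ ∘ₗ homMk k C X Y c) :
    φ = ψ :=
  Submodule.linearMap_qext _ (DirectSum.linearMap_ext _ H)

variable (k C X Y) in
def cowedges (W : Type*) [AddCommGroup W] [Module k W] :
    Submodule k (∀ c : C, (Y.obj c →ₗ[k] X.obj c) →ₗ[k] W) where
  carrier := { w | ∀ (A B : C) (f : A ⟶ B) (h : Y.obj B →ₗ[k] X.obj A),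
    w A (h ∘ₗ (Y.map f).hom) = w B ((X.map f).hom ∘ₗ h) }
  add_mem' hv hw A B f h := by
    simp only [Pi.add_apply, LinearMap.add_apply, hv A B f h, hw A B f h]
  zero_mem' _ _ _ _ := rfl
  smul_mem' a w hw A B f h := by simp only [Pi.smul_apply, LinearMap.smul_apply, hw A B f h]

variable (W : Type*) [AddCommGroup W] [Module k W]

def HomCheck.desc (w : cowedges k C X Y W) : HomCheck k C X Y →ₗ[k] W :=
  (homRel k C X Y).liftQ (DirectSum.toModule k C W w.1) <| by
    rw [homRel, Submodule.span_le]
    rintro _ ⟨A, B, f, h, rfl⟩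
    simp [w.2 A B f h]

@[simp]
theorem HomCheck.desc_comp_homMk (w : cowedges k C X Y W) (c : C) :
    HomCheck.desc W w ∘ₗ homMk k C X Y c = w.1 c :=
  LinearMap.ext fun _ => DirectSum.toModule_lof ..

def HomCheck.homEquivCowedges : (HomCheck k C X Y →ₗ[k] W) ≃ₗ[k] cowedges k C X Y W where
  toFun φ := ⟨fun c => φ ∘ₗ homMk k C X Y c, fun A B f h => congr(φ $(homMk_comp_map A B f h))⟩
  map_add' _ _ := rfl
  map_smul' _ _ := rfl
  invFun := HomCheck.desc W
  left_inv _ := HomCheck.hom_ext fun _ => HomCheck.desc_comp_homMk ..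
  right_inv w := Subtype.ext <| funext <| HomCheck.desc_comp_homMk W w

variable {W} in
theorem HomCheck.existsUnique_comp_homMk_eq (w : ∀ c : C, (Y.obj c →ₗ[k] X.obj c) →ₗ[k] W)
    (hw : w ∈ cowedges k C X Y W) :
    ∃! φ : HomCheck k C X Y →ₗ[k] W, ∀ c, φ ∘ₗ homMk k C X Y c = w c :=
  (existsUnique_congr fun _ => Subtype.ext_iff.trans funext_iff).mp
    ((HomCheck.homEquivCowedges W).bijective.existsUnique ⟨w, hw⟩)

end Coend

section End

variable {k C X Y} [∀ c : C, FiniteDimensional k (X.obj c)] [∀ c : C, FiniteDimensional k (Y.obj c)]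

/-- Via the trace pairing, the dinaturality of `u` becomes the cowedge condition on
`h ↦ Tr(u_C ∘ h)`. -/
theorem homEnd_eq_comap_cowedges :
    homEnd k C X Y = (cowedges k C X Y k).comap
      (LinearEquiv.piCongrRight fun c =>
        LinearMap.traceDualEquiv k (X.obj c) (Y.obj c)).toLinearMap := by
  ext u
  refine forall₂_congr fun A B => forall_congr' fun f => ?_
  exact LinearMap.ext_iff.symm.trans LinearMap.comp_eq_comp_iff_forall_trace_eq

variable (k C X Y) in
def homEndEquivDual : homEnd k C X Y ≃ₗ[k] Module.Dual k (HomCheck k C X Y) :=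
  (LinearEquiv.ofEq _ _ homEnd_eq_comap_cowedges).trans <|
    ((LinearEquiv.piCongrRight fun c =>
      LinearMap.traceDualEquiv k (X.obj c) (Y.obj c)).ofSubmodule' (cowedges k C X Y k)).trans
        (HomCheck.homEquivCowedges k).symm

theorem homEndEquivDual_apply_homMk (u : homEnd k C X Y) (c : C) (h : Y.obj c →ₗ[k] X.obj c) :
    homEndEquivDual k C X Y u (homMk k C X Y c h) = LinearMap.trace k (Y.obj c) (u.1 c ∘ₗ h) :=
  LinearMap.congr_fun (HomCheck.desc_comp_homMk k _ c) h

end End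

/-- Tannaka: for `X, Y : C ⥤ Vect_k` with finite-dimensional values, the bifunctor
`(A, B) ↦ Hom_k(X(A), Y(B))` has a coend `Hom̌(X,Y)` (the canonical maps `h ↦ [h]` form a
universal cowedge), and the linear dual `Hom̌(X,Y)*` is isomorphic to the end `Hom(X,Y)`
(the space of families `u = {u_C}` with `Y(f) ∘ u_A = u_B ∘ X(f)`); the isomorphism is
induced by the pairing `⟨u, [h]⟩ = Tr(u_C ∘ h)` for `h ∈ Hom_k(Y(C), X(C))`. -/
theorem homCheck_dual_iso_homEnd
    [∀ c : C, FiniteDimensional k (X.obj c)] [∀ c : C, FiniteDimensional k (Y.obj c)] :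
    -- the canonical maps form a cowedge (dinaturality)
    (∀ (A B : C) (f : A ⟶ B) (h : Y.obj B →ₗ[k] X.obj A),
      homMk k C X Y A (h ∘ₗ ((Y.map f).hom : Y.obj A →ₗ[k] Y.obj B)) =
        homMk k C X Y B (((X.map f).hom : X.obj A →ₗ[k] X.obj B) ∘ₗ h)) ∧
    -- universality: every cowedge factors uniquely through `Hom̌(X,Y)`
    (∀ (W : Type u) [AddCommGroup W] [Module k W]
      (w : ∀ c : C, (Y.obj c →ₗ[k] X.obj c) →ₗ[k] W),
      (∀ (A B : C) (f : A ⟶ B) (h : Y.obj B →ₗ[k] X.obj A),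
        w A (h ∘ₗ ((Y.map f).hom : Y.obj A →ₗ[k] Y.obj B)) =
          w B (((X.map f).hom : X.obj A →ₗ[k] X.obj B) ∘ₗ h)) →
      ∃! φ : HomCheck k C X Y →ₗ[k] W, ∀ c : C, φ ∘ₗ homMk k C X Y c = w c) ∧
    -- the end is isomorphic to the dual of the coend, via the trace pairing
    (∃ e : homEnd k C X Y ≃ₗ[k] Module.Dual k (HomCheck k C X Y),
      ∀ (u : homEnd k C X Y) (c : C) (h : Y.obj c →ₗ[k] X.obj c),
        e u (homMk k C X Y c h) = LinearMap.trace k (Y.obj c) (u.1 c ∘ₗ h)) :=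
  ⟨homMk_comp_map, fun _ _ _ => HomCheck.existsUnique_comp_homMk_eq,
    homEndEquivDual k C X Y, homEndEquivDual_apply_homMk⟩

end
end

section
/- Let C be an abelian monoidal category such that for every object U the functors U⊗− and −⊗U are additive and exact, and let f : (U, c) → (U', c') be a morphism in the Drinfeld center Z(C). Let κ : K → U be a kernel of f : U → U' in C and π : U' → Q a cokernel of f in C. Then there exist unique half-braidings 𝔎 on K and ℭ on Q such that κ : (K, 𝔎) → (U, c) and π : (U', c') → (Q, ℭ) are morphisms in Z(C), and with these structures κ is a kernel of f in Z(C) and π is a cokernel of f in Z(C). In particular the forgetful functor Z(C) → C, (U,c) ↦ U, is exact. -/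
/-!
The half-braidings of the objects of a diagram `K` in `Z(C)` form natural isomorphisms
`K ⋙ (- ⊗ V) ≅ K ⋙ (V ⊗ -)` of the underlying diagrams. When tensoring preserves a limit `L` of
the underlying diagram, they induce isomorphisms `L ⊗ V ≅ V ⊗ L`. The axioms of a half-braiding,
the compatibility of the induced lifts and the uniqueness of the half-braiding are all equations
between maps into `V ⊗ L`; as `V ⊗ -` preserves the limit, the maps `V ◁ π j` are jointly monic,
and composed with them each equation becomes the corresponding one for the diagram. A kernel is
the limit of the parallel pair `(f, 0)`, whose single relevant projection is `V ◁ κ`; colimits and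
cokernels are dual, with `- ⊗ V` in place of `V ⊗ -`.
-/

open CategoryTheory Limits MonoidalCategory

universe v u

/-- Build an object of the Drinfeld center from an object and a half-braiding. -/
def CategoryTheory.Center.mk' {C : Type u} [Category.{v} C] [MonoidalCategory C]
    (X : C) (b : HalfBraiding X) : Center C := ⟨X, b⟩

noncomputable section

namespace CategoryTheory

variable {C : Type u} [Category.{v} C] [MonoidalCategory C]

@[ext]
lemma HalfBraiding.ext {Z : C} {b₁ b₂ : HalfBraiding Z}
    (h : ∀ V, (b₁.β V).hom = (b₂.β V).hom) : b₁ = b₂ := by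
  obtain ⟨β₁, _, _⟩ := b₁
  obtain ⟨β₂, _, _⟩ := b₂
  obtain rfl : β₁ = β₂ := funext fun V => Iso.ext (h V)
  rfl

section JointlyMono

variable {ι : Type*} {Z : C}

def WhiskerLeftJointlyMono {W : ι → C} (p : ∀ i, Z ⟶ W i) : Prop :=
  ∀ (V : C) {T : C} (g h : T ⟶ V ⊗ Z), (∀ i, g ≫ (V ◁ p i) = h ≫ (V ◁ p i)) → g = h

lemma whiskerLeftJointlyMono_of_mono [∀ V : C, (tensorLeft V).PreservesMonomorphisms]
    {W : C} (p : Z ⟶ W) [Mono p] : WhiskerLeftJointlyMono fun _ : Unit => p := fun V _ _ _ h =>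
  haveI : Mono (V ◁ p) := (tensorLeft V).map_mono p
  (cancel_mono (V ◁ p)).1 (h ())

def HalfBraiding.ofJointlyMono {W : ι → Center C} (p : ∀ i, Z ⟶ (W i).1)
    (hp : WhiskerLeftJointlyMono p) (β : ∀ V, Z ⊗ V ≅ V ⊗ Z)
    (comm : ∀ V i, (p i ▷ V) ≫ ((W i).2.β V).hom = (β V).hom ≫ (V ◁ p i)) :
    HalfBraiding Z where
  β := β
  monoidal U U' := hp _ _ _ fun i => by
    have hU := congrArg (· ▷ U') (comm U i)
    have hU' := congrArg (U ◁ ·) (comm U' i)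
    simp only [comp_whiskerRight, MonoidalCategory.whiskerLeft_comp] at hU hU'
    rw [← comm]
    simp [reassoc_of% hU, reassoc_of% hU']
  naturality {U U'} g := hp _ _ _ fun i => by
    simp only [Category.assoc, ← comm, whisker_exchange_assoc, HalfBraiding.naturality,
      reassoc_of% comm, ← whisker_exchange]

def Center.homOfJointlyMono {A B : Center C} {W : ι → Center C} (p : ∀ i, B ⟶ W i)
    (hp : WhiskerLeftJointlyMono fun i => (p i).f) (l : A.1 ⟶ B.1) (g : ∀ i, A ⟶ W i)
    (hl : ∀ i, l ≫ (p i).f = (g i).f) : A ⟶ B where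
  f := l
  comm V := hp V _ _ fun i => by
    rw [Category.assoc, ← (p i).comm, ← comp_whiskerRight_assoc, hl, (g i).comm,
      Category.assoc, ← MonoidalCategory.whiskerLeft_comp, hl]

end JointlyMono

section JointlyEpi

variable {ι : Type*} {Z : C}

def WhiskerRightJointlyEpi {W : ι → C} (p : ∀ i, W i ⟶ Z) : Prop :=
  ∀ (V : C) {T : C} (g h : Z ⊗ V ⟶ T), (∀ i, (p i ▷ V) ≫ g = (p i ▷ V) ≫ h) → g = h

lemma whiskerRightJointlyEpi_of_epi [∀ V : C, (tensorRight V).PreservesEpimorphisms]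
    {W : C} (p : W ⟶ Z) [Epi p] : WhiskerRightJointlyEpi fun _ : Unit => p := fun V _ _ _ h =>
  haveI : Epi (p ▷ V) := (tensorRight V).map_epi p
  (cancel_epi (p ▷ V)).1 (h ())

def HalfBraiding.ofJointlyEpi {W : ι → Center C} (p : ∀ i, (W i).1 ⟶ Z)
    (hp : WhiskerRightJointlyEpi p) (β : ∀ V, Z ⊗ V ≅ V ⊗ Z)
    (comm : ∀ V i, (p i ▷ V) ≫ (β V).hom = ((W i).2.β V).hom ≫ (V ◁ p i)) :
    HalfBraiding Z where
  β := β
  monoidal U U' := hp _ _ _ fun i => by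
    have hU := congrArg (· ▷ U') (comm U i)
    have hU' := congrArg (U ◁ ·) (comm U' i)
    simp only [comp_whiskerRight, MonoidalCategory.whiskerLeft_comp] at hU hU'
    rw [comm]
    simp [reassoc_of% hU, reassoc_of% hU']
  naturality {U U'} g := hp _ _ _ fun i => by
    rw [← whisker_exchange_assoc, comm, HalfBraiding.naturality_assoc, reassoc_of% comm,
      whisker_exchange]

def Center.homOfJointlyEpi {A B : Center C} {W : ι → Center C} (p : ∀ i, W i ⟶ A)
    (hp : WhiskerRightJointlyEpi fun i => (p i).f) (l : A.1 ⟶ B.1) (g : ∀ i, W i ⟶ B)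
    (hl : ∀ i, (p i).f ≫ l = (g i).f) : A ⟶ B where
  f := l
  comm V := hp V _ _ fun i => by
    dsimp only
    rw [← comp_whiskerRight_assoc, hl, (g i).comm, ← Category.assoc, (p i).comm,
      Category.assoc, ← MonoidalCategory.whiskerLeft_comp, hl]

end JointlyEpi

namespace Center

variable {J : Type*} [Category J] (K : J ⥤ Center C) in
def diagramβ (V : C) :
    (K ⋙ forget C) ⋙ tensorRight V ≅ (K ⋙ forget C) ⋙ tensorLeft V :=
  NatIso.ofComponents (fun j => (K.obj j).2.β V) (fun φ => (K.map φ).comm V)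

section Limits

variable {J : Type*} [Category J] (K : J ⥤ Center C)
  [∀ U : C, PreservesLimitsOfShape J (tensorLeft U)]
  [∀ U : C, PreservesLimitsOfShape J (tensorRight U)] {c : Cone (K ⋙ forget C)}

def limitβ (hc : IsLimit c) (V : C) : c.pt ⊗ V ≅ V ⊗ c.pt :=
  (isLimitOfPreserves (tensorRight V) hc).conePointsIsoOfNatIso
    (isLimitOfPreserves (tensorLeft V) hc) (diagramβ K V)

lemma limitβ_comm (hc : IsLimit c) (V : C) (j : J) :
    (c.π.app j ▷ V) ≫ ((K.obj j).2.β V).hom = (limitβ K hc V).hom ≫ (V ◁ c.π.app j) :=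
  (IsLimit.conePointsIsoOfNatIso_hom_comp (isLimitOfPreserves (tensorRight V) hc)
    (isLimitOfPreserves (tensorLeft V) hc) (diagramβ K V) j).symm

def liftedLimitCone (hc : IsLimit c) : Cone K where
  pt := ⟨c.pt, HalfBraiding.ofJointlyMono (W := K.obj) c.π.app
    (fun V _ _ _ => (isLimitOfPreserves (tensorLeft V) hc).hom_ext) (limitβ K hc)
    (limitβ_comm K hc)⟩
  π.app j := ⟨c.π.app j, fun V => limitβ_comm K hc V j⟩
  π.naturality _ _ φ := Center.ext _ _ (c.π.naturality φ)

def isLimitLiftedLimitCone (hc : IsLimit c) : IsLimit (liftedLimitCone K hc) where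
  lift s := homOfJointlyMono (liftedLimitCone K hc).π.app
    (fun V _ _ _ => (isLimitOfPreserves (tensorLeft V) hc).hom_ext)
    (hc.lift ((forget C).mapCone s)) s.π.app (hc.fac _)
  fac _ j := Center.ext _ _ (hc.fac _ j)
  uniq s m w := Center.ext _ _
    (hc.uniq ((forget C).mapCone s) m.f fun j => congrArg Hom.f (w j))

instance : CreatesLimitsOfShape J (forget C) where
  CreatesLimit {K} := createsLimitOfReflectsIso fun _ hc =>
    { liftedCone := liftedLimitCone K hc
      validLift := Cone.ext (Iso.refl _) fun _ => (Category.id_comp _).symm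
      makesLimit := isLimitLiftedLimitCone K hc }

end Limits

section Colimits

variable {J : Type*} [Category J] (K : J ⥤ Center C)
  [∀ U : C, PreservesColimitsOfShape J (tensorLeft U)]
  [∀ U : C, PreservesColimitsOfShape J (tensorRight U)] {c : Cocone (K ⋙ forget C)}

def colimitβ (hc : IsColimit c) (V : C) : c.pt ⊗ V ≅ V ⊗ c.pt :=
  (isColimitOfPreserves (tensorRight V) hc).coconePointsIsoOfNatIso
    (isColimitOfPreserves (tensorLeft V) hc) (diagramβ K V)

lemma colimitβ_comm (hc : IsColimit c) (V : C) (j : J) :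
    (c.ι.app j ▷ V) ≫ (colimitβ K hc V).hom = ((K.obj j).2.β V).hom ≫ (V ◁ c.ι.app j) :=
  IsColimit.comp_coconePointsIsoOfNatIso_hom (isColimitOfPreserves (tensorRight V) hc)
    (isColimitOfPreserves (tensorLeft V) hc) (diagramβ K V) j

def liftedColimitCocone (hc : IsColimit c) : Cocone K where
  pt := ⟨c.pt, HalfBraiding.ofJointlyEpi (W := K.obj) c.ι.app
    (fun V _ _ _ => (isColimitOfPreserves (tensorRight V) hc).hom_ext) (colimitβ K hc)
    (colimitβ_comm K hc)⟩
  ι.app j := ⟨c.ι.app j, fun V => colimitβ_comm K hc V j⟩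
  ι.naturality _ _ φ := Center.ext _ _ (c.ι.naturality φ)

def isColimitLiftedColimitCocone (hc : IsColimit c) : IsColimit (liftedColimitCocone K hc) where
  desc s := homOfJointlyEpi (liftedColimitCocone K hc).ι.app
    (fun V _ _ _ => (isColimitOfPreserves (tensorRight V) hc).hom_ext)
    (hc.desc ((forget C).mapCocone s)) s.ι.app (hc.fac _)
  fac _ j := Center.ext _ _ (hc.fac _ j)
  uniq s m w := Center.ext _ _
    (hc.uniq ((forget C).mapCocone s) m.f fun j => congrArg Hom.f (w j))

instance : CreatesColimitsOfShape J (forget C) where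
  CreatesColimit {K} := createsColimitOfReflectsIso fun _ hc =>
    { liftedCocone := liftedColimitCocone K hc
      validLift := Cocone.ext (Iso.refl _) fun _ => Category.comp_id _
      makesColimit := isColimitLiftedColimitCocone K hc }

end Colimits

section ParallelPair

variable [HasZeroMorphisms C] [∀ U : C, (tensorLeft U).PreservesZeroMorphisms]
  [∀ U : C, (tensorRight U).PreservesZeroMorphisms] {X Y : Center C} (f : X ⟶ Y)

def parallelPairβ (V : C) :
    parallelPair f.f 0 ⋙ tensorRight V ≅ parallelPair f.f 0 ⋙ tensorLeft V :=
  parallelPair.ext (X.2.β V) (Y.2.β V) (f.comm V) (by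
    simp only [Functor.comp_map, parallelPair_map_right, Functor.map_zero, zero_comp, comp_zero])

end ParallelPair

section Kernels

variable [Abelian C] [∀ U : C, PreservesFiniteLimits (tensorLeft U)] {X Y : Center C}
  (f : X ⟶ Y)

lemma existsUnique_kernel_lift {𝔎 : HalfBraiding (kernel f.f)}
    (h𝔎 : ∀ V : C, (kernel.ι f.f ▷ V) ≫ (X.2.β V).hom = (𝔎.β V).hom ≫ (V ◁ kernel.ι f.f))
    {T : Center C} (g : T ⟶ X) (hg : g.f ≫ f.f = 0) :
    ∃! g' : T ⟶ Center.mk' (kernel f.f) 𝔎,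
      g' ≫ (⟨kernel.ι f.f, h𝔎⟩ : Center.mk' (kernel f.f) 𝔎 ⟶ X) = g :=
  ⟨homOfJointlyMono (fun _ : Unit => ⟨kernel.ι f.f, h𝔎⟩)
      (whiskerLeftJointlyMono_of_mono (kernel.ι f.f)) (kernel.lift f.f g.f hg) (fun _ => g)
      (fun _ => kernel.lift_ι _ _ _),
    Center.ext _ _ (kernel.lift_ι _ _ _),
    fun _ hg' => Center.ext _ _ <| (cancel_mono (kernel.ι f.f)).1 <|
      (congrArg Hom.f hg').trans (kernel.lift_ι _ _ _).symm⟩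

variable [∀ U : C, PreservesFiniteLimits (tensorRight U)]

def kernelβ (V : C) : kernel f.f ⊗ V ≅ V ⊗ kernel f.f :=
  (isLimitOfPreserves (tensorRight V) (kernelIsKernel f.f)).conePointsIsoOfNatIso
    (isLimitOfPreserves (tensorLeft V) (kernelIsKernel f.f)) (parallelPairβ f V)

lemma kernelβ_comm (V : C) :
    (kernel.ι f.f ▷ V) ≫ (X.2.β V).hom = (kernelβ f V).hom ≫ (V ◁ kernel.ι f.f) :=
  (IsLimit.conePointsIsoOfNatIso_hom_comp
    (isLimitOfPreserves (tensorRight V) (kernelIsKernel f.f))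
    (isLimitOfPreserves (tensorLeft V) (kernelIsKernel f.f)) (parallelPairβ f V)
    WalkingParallelPair.zero).symm

def kernelHalfBraiding : HalfBraiding (kernel f.f) :=
  .ofJointlyMono _ (whiskerLeftJointlyMono_of_mono (kernel.ι f.f)) (kernelβ f)
    fun V _ => kernelβ_comm f V

lemma eq_kernelHalfBraiding (𝔎 : HalfBraiding (kernel f.f))
    (h𝔎 : ∀ V : C, (kernel.ι f.f ▷ V) ≫ (X.2.β V).hom = (𝔎.β V).hom ≫ (V ◁ kernel.ι f.f)) :
    𝔎 = kernelHalfBraiding f :=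
  HalfBraiding.ext fun V => whiskerLeftJointlyMono_of_mono (kernel.ι f.f) V _ _ fun _ =>
    (h𝔎 V).symm.trans (kernelβ_comm f V)

end Kernels

section Cokernels

variable [Abelian C] [∀ U : C, PreservesFiniteColimits (tensorRight U)] {X Y : Center C}
  (f : X ⟶ Y)

lemma existsUnique_cokernel_desc {ℭ : HalfBraiding (cokernel f.f)}
    (hℭ : ∀ V : C,
      (cokernel.π f.f ▷ V) ≫ (ℭ.β V).hom = (Y.2.β V).hom ≫ (V ◁ cokernel.π f.f))
    {T : Center C} (g : Y ⟶ T) (hg : f.f ≫ g.f = 0) :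
    ∃! g' : Center.mk' (cokernel f.f) ℭ ⟶ T,
      (⟨cokernel.π f.f, hℭ⟩ : Y ⟶ Center.mk' (cokernel f.f) ℭ) ≫ g' = g :=
  ⟨homOfJointlyEpi (fun _ : Unit => ⟨cokernel.π f.f, hℭ⟩)
      (whiskerRightJointlyEpi_of_epi (cokernel.π f.f)) (cokernel.desc f.f g.f hg) (fun _ => g)
      (fun _ => cokernel.π_desc _ _ _),
    Center.ext _ _ (cokernel.π_desc _ _ _),
    fun _ hg' => Center.ext _ _ <| (cancel_epi (cokernel.π f.f)).1 <|
      (congrArg Hom.f hg').trans (cokernel.π_desc _ _ _).symm⟩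

variable [∀ U : C, PreservesFiniteColimits (tensorLeft U)]

def cokernelβ (V : C) : cokernel f.f ⊗ V ≅ V ⊗ cokernel f.f :=
  (isColimitOfPreserves (tensorRight V) (cokernelIsCokernel f.f)).coconePointsIsoOfNatIso
    (isColimitOfPreserves (tensorLeft V) (cokernelIsCokernel f.f)) (parallelPairβ f V)

lemma cokernelβ_comm (V : C) :
    (cokernel.π f.f ▷ V) ≫ (cokernelβ f V).hom = (Y.2.β V).hom ≫ (V ◁ cokernel.π f.f) :=
  IsColimit.comp_coconePointsIsoOfNatIso_hom
    (isColimitOfPreserves (tensorRight V) (cokernelIsCokernel f.f))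
    (isColimitOfPreserves (tensorLeft V) (cokernelIsCokernel f.f)) (parallelPairβ f V)
    WalkingParallelPair.one

def cokernelHalfBraiding : HalfBraiding (cokernel f.f) :=
  .ofJointlyEpi _ (whiskerRightJointlyEpi_of_epi (cokernel.π f.f)) (cokernelβ f)
    fun V _ => cokernelβ_comm f V

lemma eq_cokernelHalfBraiding (ℭ : HalfBraiding (cokernel f.f))
    (hℭ : ∀ V : C,
      (cokernel.π f.f ▷ V) ≫ (ℭ.β V).hom = (Y.2.β V).hom ≫ (V ◁ cokernel.π f.f)) :
    ℭ = cokernelHalfBraiding f :=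
  HalfBraiding.ext fun V => whiskerRightJointlyEpi_of_epi (cokernel.π f.f) V _ _ fun _ =>
    (hℭ V).trans (cokernelβ_comm f V).symm

end Cokernels

end Center

end CategoryTheory

end

/-- Let `C` be an abelian monoidal category in which the functors `U ⊗ -` and `- ⊗ U` are
additive and exact for every object `U`, and let `f : (U, c) ⟶ (U', c')` be a morphism in
the Drinfeld center `Z(C)`. Let `κ : K → U` be a kernel and `π : U' → Q` a cokernel of the
underlying morphism `f : U ⟶ U'` in `C`. Then there is a unique half-braiding `𝔎` on `K`
making `κ` a morphism in `Z(C)`, and a unique half-braiding `ℭ` on `Q` making `π` a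
morphism in `Z(C)`; with these structures `κ` is a kernel and `π` is a cokernel of `f`
in `Z(C)`. In particular the forgetful functor `Z(C) → C` is exact. -/
theorem center_kernel_cokernel (C : Type u) [Category.{v} C] [Abelian C]
    [MonoidalCategory C]
    [∀ U : C, (tensorLeft U).Additive] [∀ U : C, (tensorRight U).Additive]
    [∀ U : C, PreservesFiniteLimits (tensorLeft U)]
    [∀ U : C, PreservesFiniteColimits (tensorLeft U)]
    [∀ U : C, PreservesFiniteLimits (tensorRight U)]
    [∀ U : C, PreservesFiniteColimits (tensorRight U)]
    (X Y : Center C) (f : X ⟶ Y) :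
    -- unique half-braiding on the kernel object making `kernel.ι` a morphism in the center
    (∃! 𝔎 : HalfBraiding (kernel f.f),
      ∀ V : C, (kernel.ι f.f ▷ V) ≫ (X.2.β V).hom = (𝔎.β V).hom ≫ (V ◁ kernel.ι f.f)) ∧
    -- unique half-braiding on the cokernel object making `cokernel.π` a morphism in the center
    (∃! ℭ : HalfBraiding (cokernel f.f),
      ∀ V : C, (cokernel.π f.f ▷ V) ≫ (ℭ.β V).hom = (Y.2.β V).hom ≫ (V ◁ cokernel.π f.f)) ∧
    -- with this structure, `kernel.ι` is a kernel of `f` in the center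
    (∀ (𝔎 : HalfBraiding (kernel f.f))
      (h𝔎 : ∀ V : C,
        (kernel.ι f.f ▷ V) ≫ (X.2.β V).hom = (𝔎.β V).hom ≫ (V ◁ kernel.ι f.f)),
      ((⟨kernel.ι f.f, h𝔎⟩ : Center.mk' (kernel f.f) 𝔎 ⟶ X) ≫ f).f = 0 ∧
      ∀ (T : Center C) (g : T ⟶ X), g.f ≫ f.f = 0 →
        ∃! g' : T ⟶ Center.mk' (kernel f.f) 𝔎,
          g' ≫ (⟨kernel.ι f.f, h𝔎⟩ : Center.mk' (kernel f.f) 𝔎 ⟶ X) = g) ∧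
    -- with this structure, `cokernel.π` is a cokernel of `f` in the center
    (∀ (ℭ : HalfBraiding (cokernel f.f))
      (hℭ : ∀ V : C,
        (cokernel.π f.f ▷ V) ≫ (ℭ.β V).hom = (Y.2.β V).hom ≫ (V ◁ cokernel.π f.f)),
      (f ≫ (⟨cokernel.π f.f, hℭ⟩ : Y ⟶ Center.mk' (cokernel f.f) ℭ)).f = 0 ∧
      ∀ (T : Center C) (g : Y ⟶ T), f.f ≫ g.f = 0 →
        ∃! g' : Center.mk' (cokernel f.f) ℭ ⟶ T,
          (⟨cokernel.π f.f, hℭ⟩ : Y ⟶ Center.mk' (cokernel f.f) ℭ) ≫ g' = g) ∧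
    -- in particular, the forgetful functor is exact
    PreservesFiniteLimits (Center.forget C) ∧ PreservesFiniteColimits (Center.forget C) :=
  ⟨⟨Center.kernelHalfBraiding f, Center.kernelβ_comm f, Center.eq_kernelHalfBraiding f⟩,
    ⟨Center.cokernelHalfBraiding f, Center.cokernelβ_comm f, Center.eq_cokernelHalfBraiding f⟩,
    fun _ h𝔎 => ⟨kernel.condition f.f, fun _ => Center.existsUnique_kernel_lift f h𝔎⟩,
    fun _ hℭ => ⟨cokernel.condition f.f, fun _ => Center.existsUnique_cokernel_desc f hℭ⟩,
    ⟨fun _ _ _ => inferInstance⟩, ⟨fun _ _ _ => inferInstance⟩⟩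
end
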